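/- arXiv:math/0504603 — 2 statements merged into one kernel-verified Lean document; each statement's English description precedes it below -/
import Mathlib

section
/- If ν is a finite Borel measure on [0,∞) and f(t) = ∫₀^∞ exp(−t²s/2) dν(s), then for every n ≥ 1 the function x ↦ f(‖x‖) on ℝⁿ is positive semi-definite. -/
/-!
A scale mixture of Gaussians is a characteristic function: if `S ∼ ν` and `ξ` is a standard
Gaussian vector independent of `S`, then `E exp(i⟪√S ξ, x⟫) = ∫ exp(-‖x‖² s / 2) dν(s) = f(‖x‖)`.
The characteristic function `φ` of any finite measure `μ` is positive semi-definite, since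
`∑ᵢ ∑ⱼ φ(xᵢ - xⱼ) cᵢ c̄ⱼ = ∫ |∑ᵢ cᵢ exp(i⟪ξ, xᵢ⟫)|² dμ(ξ) ≥ 0`.
-/

open MeasureTheory Complex Finset

/-- `g` is positive semi-definite on `ℝⁿ` (as `EuclideanSpace ℝ (Fin n)`). -/
def IsPosSemidef (n : ℕ) (g : EuclideanSpace ℝ (Fin n) → ℂ) : Prop :=
  ∀ (k : ℕ) (x : Fin k → EuclideanSpace ℝ (Fin n)) (c : Fin k → ℂ),
    0 ≤ (∑ i, ∑ j, g (x i - x j) * c i * (starRingEnd ℂ) (c j)).re ∧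
      (∑ i, ∑ j, g (x i - x j) * c i * (starRingEnd ℂ) (c j)).im = 0

open ProbabilityTheory

open scoped ComplexOrder ComplexConjugate RealInnerProductSpace

theorem isPosSemidef_of_sum_mul_conj_nonneg {n : ℕ} {g : EuclideanSpace ℝ (Fin n) → ℂ}
    (h : ∀ (k : ℕ) (x : Fin k → EuclideanSpace ℝ (Fin n)) (c : Fin k → ℂ),
      0 ≤ ∑ i, ∑ j, g (x i - x j) * c i * conj (c j)) :
    IsPosSemidef n g := fun k x c =>
  have ⟨hre, him⟩ := Complex.nonneg_iff.1 (h k x c)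
  ⟨hre, him.symm⟩

section

variable {E : Type*} [NormedAddCommGroup E] [InnerProductSpace ℝ E] [MeasurableSpace E]

theorem charFun_sub_mul_conj_nonneg [OpensMeasurableSpace E] {ι : Type*} [Fintype ι]
    (μ : Measure E) [IsFiniteMeasure μ] (x : ι → E) (c : ι → ℂ) :
    0 ≤ ∑ i, ∑ j, charFun μ (x i - x j) * c i * conj (c j) := by
  set w : E → ℂ := fun ξ => ∑ i, c i * exp (⟪ξ, x i⟫ * I)
  have hint : ∀ i j, Integrable (fun ξ => exp (⟪ξ, x i - x j⟫ * I) * c i * conj (c j)) μ :=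
    fun i j => ((BoundedContinuousFunction.innerProbChar (x i - x j)).integrable μ).mul_const _
      |>.mul_const _
  have hnormSq : ∀ ξ,
      ∑ i, ∑ j, exp (⟪ξ, x i - x j⟫ * I) * c i * conj (c j) = (normSq (w ξ) : ℂ) := by
    intro ξ
    rw [← mul_conj, map_sum, sum_mul_sum]
    refine sum_congr rfl fun i _ => sum_congr rfl fun j _ => ?_
    rw [inner_sub_right, ofReal_sub, sub_mul, exp_sub, map_mul, ← exp_conj, map_mul, conj_ofReal,
      conj_I, mul_neg, exp_neg, div_eq_mul_inv]
    ring
  calc (0 : ℂ) ≤ ((∫ ξ, normSq (w ξ) ∂μ : ℝ) : ℂ) :=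
        zero_le_real.2 (integral_nonneg fun ξ => normSq_nonneg _)
    _ = ∫ ξ, (normSq (w ξ) : ℂ) ∂μ := integral_ofReal.symm
    _ = ∫ ξ, ∑ i, ∑ j, exp (⟪ξ, x i - x j⟫ * I) * c i * conj (c j) ∂μ := by
        simp_rw [hnormSq]
    _ = ∑ i, ∑ j, charFun μ (x i - x j) * c i * conj (c j) := by
        rw [integral_finsetSum _ fun i _ => integrable_finsetSum _ fun j _ => hint i j]
        refine sum_congr rfl fun i _ => ?_
        rw [integral_finsetSum _ fun j _ => hint i j]
        simp_rw [integral_mul_const, charFun_apply]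

theorem charFun_map_sqrt_smul_prod_stdGaussian [FiniteDimensional ℝ E] [BorelSpace E]
    (ν : Measure ℝ) [IsFiniteMeasure ν] (hν : ν (Set.Iio 0) = 0) (t : E) :
    charFun ((ν.prod (stdGaussian E)).map fun p => √p.1 • p.2) t
      = ((∫ s, Real.exp (-‖t‖ ^ 2 * s / 2) ∂ν : ℝ) : ℂ) := by
  have hnonneg : ∀ᵐ s ∂ν, 0 ≤ s := by
    rw [ae_iff]
    simp only [not_le]
    exact hν
  rw [charFun_apply, integral_map (by fun_prop) (by fun_prop),
    integral_prod _ (.of_bound (by fun_prop) 1 (ae_of_all _ fun p => by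
      simp [norm_exp_ofReal_mul_I])), ← integral_complex_ofReal]
  refine integral_congr_ae ?_
  filter_upwards [hnonneg] with s hs
  simp_rw [real_inner_smul_left, ← real_inner_smul_right]
  rw [← charFun_apply, charFun_stdGaussian, ofReal_exp, norm_smul,
    Real.norm_of_nonneg (Real.sqrt_nonneg s), ← ofReal_pow, mul_pow, Real.sq_sqrt hs]
  push_cast
  ring_nf

end

theorem stmt0_general (ν : Measure ℝ) [IsFiniteMeasure ν] (hν : ν (Set.Iio 0) = 0)
    (f : ℝ → ℝ) (hf : ∀ t, f t = ∫ s, Real.exp (-t ^ 2 * s / 2) ∂ν)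
    (n : ℕ) :
    IsPosSemidef n (fun x => (f ‖x‖ : ℂ)) := by
  set μ := (ν.prod (stdGaussian (EuclideanSpace ℝ (Fin n)))).map fun p => √p.1 • p.2
  have hμ : (fun x => (f ‖x‖ : ℂ)) = charFun μ := funext fun x => by
    rw [hf, charFun_map_sqrt_smul_prod_stdGaussian ν hν]
  rw [hμ]
  exact isPosSemidef_of_sum_mul_conj_nonneg fun k x c => charFun_sub_mul_conj_nonneg μ x c

theorem stmt0 (ν : Measure ℝ) [IsFiniteMeasure ν] (hν : ν (Set.Iio 0) = 0)
    (f : ℝ → ℝ) (hf : ∀ t, f t = ∫ s, Real.exp (-t ^ 2 * s / 2) ∂ν)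
    (n : ℕ) (hn : 1 ≤ n) :
    IsPosSemidef n (fun x => (f ‖x‖ : ℂ)) :=
  stmt0_general ν hν f hf n
end

section
/- Let {Yᵢ}_{i≥1} be an exchangeable sequence of real random variables with E[Y₁²] possibly infinite. If the Yᵢ are conditionally i.i.d. given a σ-algebra 𝓔, then L := lim_{n→∞} (1/n) ∑_{i=1}^n Yᵢ² exists almost surely in [0,∞], and {L < ∞} agrees up to null sets with {E[Y₁² | 𝓔] < ∞}. -/
/-!
Conditionally on `𝓔`, i.e. under the measures `condExpKernel P 𝓔 ω`, the `Yᵢ²` are for almost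
every `ω` pairwise independent and identically distributed, so the strong law of large numbers
(extended to nonnegative variables of infinite mean by truncation) makes the averages converge
`condExpKernel P 𝓔 ω`-a.s. to `I ω := ∫⁻ Y₀² d(condExpKernel P 𝓔 ω)`. Since `I` is
`𝓔`-measurable, it is constant on the fibres, so the averages converge to `I` itself on almost
every fibre, hence `P`-a.s. because `P` is the mixture of its fibres. So `L := I` works.
-/

open MeasureTheory ProbabilityTheory Filter Finset
open scoped Topology ENNReal

theorem ENNReal.ofReal_sum_range_div_natCast {x : ℕ → ℝ} (hx : ∀ i, 0 ≤ x i) (n : ℕ) :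
    ENNReal.ofReal ((∑ i ∈ range n, x i) / n) = (∑ i ∈ range n, ENNReal.ofReal (x i)) / n := by
  rcases n.eq_zero_or_pos with rfl | hn
  · simp
  rw [ENNReal.ofReal_div_of_pos (by exact_mod_cast hn), ENNReal.ofReal_natCast,
    ENNReal.ofReal_sum_of_nonneg fun i _ => hx i]

theorem ENNReal.iSup_ofReal_min_natCast (x : ℝ) :
    ⨆ M : ℕ, ENNReal.ofReal (min x M) = ENNReal.ofReal x := by
  refine le_antisymm (iSup_le fun M => ENNReal.ofReal_le_ofReal (min_le_left _ _)) ?_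
  obtain ⟨M, hM⟩ := exists_nat_ge x
  exact le_iSup_of_le M (by rw [min_eq_left hM])

section StrongLaw

variable {Ω : Type*} {mΩ : MeasurableSpace Ω} {μ : Measure Ω} {X : ℕ → Ω → ℝ}

theorem strong_law_ae_ofReal_of_integrable (hnn : ∀ i ω, 0 ≤ X i ω) (hint : Integrable (X 0) μ)
    (hindep : Pairwise fun i j => X i ⟂ᵢ[μ] X j) (hident : ∀ i, IdentDistrib (X i) (X 0) μ μ) :
    ∀ᵐ ω ∂μ, Tendsto (fun n : ℕ => (∑ i ∈ range n, ENNReal.ofReal (X i ω)) / n) atTop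
      (𝓝 (∫⁻ ω, ENNReal.ofReal (X 0 ω) ∂μ)) := by
  filter_upwards [strong_law_ae_real X hint hindep hident] with ω hω
  rw [← ofReal_integral_eq_lintegral_ofReal hint (ae_of_all _ (hnn 0))]
  simpa only [Function.comp_def, ENNReal.ofReal_sum_range_div_natCast fun i => hnn i ω]
    using (ENNReal.continuous_ofReal.tendsto _).comp hω

theorem lintegral_ofReal_le_liminf_ae [IsFiniteMeasure μ] (hnn : ∀ i ω, 0 ≤ X i ω)
    (hindep : Pairwise fun i j => X i ⟂ᵢ[μ] X j) (hident : ∀ i, IdentDistrib (X i) (X 0) μ μ) :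
    ∀ᵐ ω ∂μ, ∫⁻ ω, ENNReal.ofReal (X 0 ω) ∂μ ≤
      liminf (fun n : ℕ => (∑ i ∈ range n, ENNReal.ofReal (X i ω)) / n) atTop := by
  have htrunc (M : ℕ) := strong_law_ae_ofReal_of_integrable (X := fun i ω => min (X i ω) M)
    (fun i ω => le_min (hnn i ω) M.cast_nonneg)
    (Integrable.of_bound
      ((hident 0).aemeasurable_fst.min aemeasurable_const).aestronglyMeasurable M
      (ae_of_all _ fun ω => by
        rw [Real.norm_of_nonneg (le_min (hnn 0 ω) M.cast_nonneg)]; exact min_le_right _ _))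
    (fun i j hij => (hindep hij).comp (measurable_id.min measurable_const)
      (measurable_id.min measurable_const))
    (fun i => (hident i).comp (measurable_id.min measurable_const))
  have hsup : ∫⁻ ω, ENNReal.ofReal (X 0 ω) ∂μ
      = ⨆ M : ℕ, ∫⁻ ω, ENNReal.ofReal (min (X 0 ω) M) ∂μ := by
    simp_rw [← ENNReal.iSup_ofReal_min_natCast (X 0 _)]
    refine lintegral_iSup' (fun M => ?_) (ae_of_all _ fun ω M N hMN => ?_)
    · exact ENNReal.measurable_ofReal.comp_aemeasurable
        ((hident 0).aemeasurable_fst.min aemeasurable_const)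
    · exact ENNReal.ofReal_le_ofReal (min_le_min_left _ (Nat.cast_le.2 hMN))
  filter_upwards [ae_all_iff.2 htrunc] with ω hω
  rw [hsup]
  refine iSup_le fun M => ?_
  rw [← (hω M).liminf_eq]
  refine liminf_le_liminf (Eventually.of_forall fun n => ?_)
  gcongr
  exact min_le_left _ _

theorem strong_law_ae_ofReal [IsFiniteMeasure μ] (hnn : ∀ i ω, 0 ≤ X i ω)
    (hindep : Pairwise fun i j => X i ⟂ᵢ[μ] X j) (hident : ∀ i, IdentDistrib (X i) (X 0) μ μ) :
    ∀ᵐ ω ∂μ, Tendsto (fun n : ℕ => (∑ i ∈ range n, ENNReal.ofReal (X i ω)) / n) atTop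
      (𝓝 (∫⁻ ω, ENNReal.ofReal (X 0 ω) ∂μ)) := by
  by_cases hfin : ∫⁻ ω, ENNReal.ofReal (X 0 ω) ∂μ = ⊤
  · filter_upwards [lintegral_ofReal_le_liminf_ae hnn hindep hident] with ω hω
    rw [hfin] at hω ⊢
    exact tendsto_of_le_liminf_of_limsup_le hω le_top
  · have hint : Integrable (X 0) μ := ⟨(hident 0).aemeasurable_fst.aestronglyMeasurable,
      (hasFiniteIntegral_iff_ofReal (ae_of_all _ (hnn 0))).2 (Ne.lt_top hfin)⟩
    exact strong_law_ae_ofReal_of_integrable hnn hint hindep hident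

end StrongLaw

theorem ProbabilityTheory.Kernel.ae_eq_of_forall_ae_apply_eq {α β : Type*}
    {mα : MeasurableSpace α} {mβ : MeasurableSpace β}
    [MeasurableSpace.CountableOrCountablyGenerated α β]
    {μ : Measure α} [IsFiniteMeasure μ] {κ η : Kernel α β} [IsFiniteKernel κ] [IsFiniteKernel η]
    (h : ∀ s, MeasurableSet s → ∀ᵐ a ∂μ, κ a s = η a s) : κ =ᵐ[μ] η := by
  refine Kernel.ae_eq_of_compProd_eq (Measure.ext_prod fun hs ht => ?_)
  rw [Measure.compProd_apply_prod hs ht, Measure.compProd_apply_prod hs ht]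
  exact setLIntegral_congr_fun_ae hs ((h _ ht).mono fun a ha _ => ha)

section CondExpKernel

variable {Ω β : Type*} {m mΩ : MeasurableSpace Ω} [StandardBorelSpace Ω]
  {μ : Measure Ω} [IsFiniteMeasure μ] [MeasurableSpace β]

theorem ae_trim_ae_condExpKernel_eq [MeasurableEq β] (hm : m ≤ mΩ) {f : Ω → β}
    (hf : Measurable[m] f) :
    ∀ᵐ ω ∂μ.trim hm, ∀ᵐ ω' ∂condExpKernel μ m ω, f ω' = f ω := by
  have hdiag : MeasurableSet[m.prod mΩ] {p : Ω × Ω | f p.2 = f p.1} :=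
    @measurableSet_eq_fun _ _ (m.prod mΩ) _ _ _ _
      ((hf.mono hm le_rfl).comp (@measurable_snd _ _ m mΩ)) (hf.comp (@measurable_fst _ _ m mΩ))
  have hmeas : @AEMeasurable _ _ (m.prod mΩ) _ (Function.diag) μ :=
    @Measurable.aemeasurable Ω (Ω × Ω) mΩ (m.prod mΩ) _ μ
      (measurable_id'' hm |>.prodMk measurable_id)
  have h1 := (@ae_map_iff _ _ mΩ (m.prod mΩ) _ _ hmeas _ hdiag).2 (ae_of_all _ fun ω => rfl)
  rw [← compProd_trim_condExpKernel hm] at h1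
  exact Measure.ae_ae_of_ae_compProd h1

theorem condExpKernel_map_ae_eq_of_condExp [MeasurableSpace.CountablyGenerated β] (hm : m ≤ mΩ)
    {f g : Ω → β} (hf : Measurable f) (hg : Measurable g)
    (h : ∀ s, MeasurableSet s → μ⟦f ⁻¹' s | m⟧ =ᵐ[μ] μ⟦g ⁻¹' s | m⟧) :
    (condExpKernel μ m).map f =ᵐ[μ.trim hm] (condExpKernel μ m).map g := by
  refine Kernel.ae_eq_of_forall_ae_apply_eq fun s hs => ?_
  have hfg : μ⟦f ⁻¹' s | m⟧ =ᵐ[μ.trim hm] μ⟦g ⁻¹' s | m⟧ :=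
    (stronglyMeasurable_condExp.ae_eq_trim_iff hm stronglyMeasurable_condExp).2 (h s hs)
  filter_upwards [condExpKernel_ae_eq_trim_condExp hm (hf hs),
    condExpKernel_ae_eq_trim_condExp hm (hg hs), hfg] with ω hf' hg' hfg'
  rw [Kernel.map_apply' _ hf _ hs, Kernel.map_apply' _ hg _ hs,
    ← measureReal_eq_measureReal_iff]
  exact hf'.trans (hfg'.trans hg'.symm)

theorem ProbabilityTheory.CondIndepFun.ae_trim_indepFun_condExpKernel {γ : Type*}
    [MeasurableSpace γ] [MeasurableSpace.CountablyGenerated β]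
    [MeasurableSpace.CountablyGenerated γ]
    (hm : m ≤ mΩ) {f : Ω → β} {g : Ω → γ} (hf : Measurable f) (hg : Measurable g)
    (h : CondIndepFun m hm f g μ) :
    ∀ᵐ ω ∂μ.trim hm, f ⟂ᵢ[condExpKernel μ m ω] g := by
  filter_upwards [(condIndepFun_iff_map_prod_eq_prod_map_map hf hg).1 h] with ω hω
  rw [indepFun_iff_map_prod_eq_prod_map_map hf.aemeasurable hg.aemeasurable]
  simpa only [Kernel.map_apply _ (hf.prodMk hg), Kernel.prod_apply, Kernel.map_apply _ hf,
    Kernel.map_apply _ hg] using hω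

theorem strong_law_ae_ofReal_condExpKernel (hm : m ≤ mΩ) {X : ℕ → Ω → ℝ}
    (hX : ∀ i, Measurable (X i)) (hnn : ∀ i ω, 0 ≤ X i ω)
    (hindep : Pairwise fun i j => CondIndepFun m hm (X i) (X j) μ)
    (hident : ∀ i s, MeasurableSet s → μ⟦X i ⁻¹' s | m⟧ =ᵐ[μ] μ⟦X 0 ⁻¹' s | m⟧) :
    ∀ᵐ ω ∂μ, Tendsto (fun n : ℕ => (∑ i ∈ range n, ENNReal.ofReal (X i ω)) / n) atTop
      (𝓝 (∫⁻ ω', ENNReal.ofReal (X 0 ω') ∂condExpKernel μ m ω)) := by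
  set κ := condExpKernel μ m
  set I : Ω → ℝ≥0∞ := fun ω => ∫⁻ ω', ENNReal.ofReal (X 0 ω') ∂κ ω
  have hI : Measurable[m] I := (ENNReal.measurable_ofReal.comp (hX 0)).lintegral_kernel
  have hindep_fiber : ∀ᵐ ω ∂μ.trim hm, Pairwise fun i j => X i ⟂ᵢ[κ ω] X j := by
    refine ae_all_iff.2 fun i => ae_all_iff.2 fun j => ?_
    rcases eq_or_ne i j with rfl | hij
    · exact ae_of_all _ fun _ h => absurd rfl h
    · exact (CondIndepFun.ae_trim_indepFun_condExpKernel hm (hX i) (hX j) (hindep hij)).mono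
        fun _ h _ => h
  have hident_fiber : ∀ᵐ ω ∂μ.trim hm, ∀ i, (κ ω).map (X i) = (κ ω).map (X 0) :=
    ae_all_iff.2 fun i => (condExpKernel_map_ae_eq_of_condExp hm (hX i) (hX 0) (hident i)).mono
      fun ω h => by rwa [Kernel.map_apply _ (hX i), Kernel.map_apply _ (hX 0)] at h
  have hlim_fiber : ∀ᵐ ω ∂μ.trim hm, ∀ᵐ ω' ∂κ ω, Tendsto
      (fun n : ℕ => (∑ i ∈ range n, ENNReal.ofReal (X i ω')) / n) atTop (𝓝 (I ω)) := by
    filter_upwards [hindep_fiber, hident_fiber] with ω hind hid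
    exact strong_law_ae_ofReal hnn hind fun i => ⟨(hX i).aemeasurable, (hX 0).aemeasurable, hid i⟩
  have hS (n : ℕ) : Measurable fun ω => (∑ i ∈ range n, ENNReal.ofReal (X i ω)) / n :=
    (Finset.measurable_sum _ fun i _ => ENNReal.measurable_ofReal.comp (hX i)).div_const _
  have hlim : ∀ᵐ ω ∂μ.trim hm, ∀ᵐ ω' ∂κ ω, Tendsto
      (fun n : ℕ => (∑ i ∈ range n, ENNReal.ofReal (X i ω')) / n) atTop (𝓝 (I ω')) := by
    filter_upwards [hlim_fiber, ae_trim_ae_condExpKernel_eq hm hI] with ω hω hconst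
    filter_upwards [hω, hconst] with ω' hω' hconst'
    rwa [hconst']
  have h := Measure.ae_comp_of_ae_ae (measurableSet_tendsto_fun hS (hI.mono hm le_rfl)) hlim
  rwa [condExpKernel_comp_trim hm] at h

end CondExpKernel

theorem stmt8_general {Ω : Type*} (𝓔 : MeasurableSpace Ω) {mΩ : MeasurableSpace Ω}
    [StandardBorelSpace Ω] (h𝓔 : 𝓔 ≤ mΩ)
    (P : Measure Ω) [IsProbabilityMeasure P]
    (Y : ℕ → Ω → ℝ) (hYm : ∀ i, Measurable (Y i))
    -- conditionally i.i.d. given 𝓔: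
    (hcondindep : iCondIndepFun 𝓔 h𝓔 Y P)
    (hcondid : ∀ i, ∀ s : Set ℝ, MeasurableSet s →
      (P[(Y i ⁻¹' s).indicator (fun _ => (1 : ℝ))|𝓔])
        =ᵐ[P] (P[(Y 0 ⁻¹' s).indicator (fun _ => (1 : ℝ))|𝓔])) :
    ∃ L : Ω → ENNReal,
      (∀ᵐ ω ∂P, Tendsto
          (fun n => (∑ i ∈ Finset.range n, ENNReal.ofReal (Y i ω ^ 2)) / n)
          atTop (nhds (L ω))) ∧
      ∀ᵐ ω ∂P, (L ω < ⊤ ↔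
        (∫⁻ ω', ENNReal.ofReal (Y 0 ω' ^ 2) ∂(condExpKernel P 𝓔 ω)) < ⊤) :=
  ⟨_, strong_law_ae_ofReal_condExpKernel h𝓔 (X := fun i ω => Y i ω ^ 2)
    (fun i => (hYm i).pow_const 2) (fun _ _ => sq_nonneg _)
    (fun _ _ hij => (hcondindep.condIndepFun hij).comp (measurable_id.pow_const 2)
      (measurable_id.pow_const 2))
    (fun i _ hs => hcondid i _ (measurable_id.pow_const 2 hs)), ae_of_all _ fun _ => Iff.rfl⟩

theorem stmt8 {Ω : Type*} (𝓔 : MeasurableSpace Ω) {mΩ : MeasurableSpace Ω}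
    [StandardBorelSpace Ω] (h𝓔 : 𝓔 ≤ mΩ)
    (P : Measure Ω) [IsProbabilityMeasure P]
    (Y : ℕ → Ω → ℝ) (hYm : ∀ i, Measurable (Y i))
    -- exchangeability: the law is invariant under finite permutations of indices
    (hexch : ∀ σ : Equiv.Perm ℕ, {i | σ i ≠ i}.Finite →
      P.map (fun ω i => Y (σ i) ω) = P.map (fun ω i => Y i ω))
    -- conditionally i.i.d. given 𝓔:
    (hcondindep : iCondIndepFun 𝓔 h𝓔 Y P)
    (hcondid : ∀ i, ∀ s : Set ℝ, MeasurableSet s →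
      (P[(Y i ⁻¹' s).indicator (fun _ => (1 : ℝ))|𝓔])
        =ᵐ[P] (P[(Y 0 ⁻¹' s).indicator (fun _ => (1 : ℝ))|𝓔])) :
    ∃ L : Ω → ENNReal,
      (∀ᵐ ω ∂P, Tendsto
          (fun n => (∑ i ∈ Finset.range n, ENNReal.ofReal (Y i ω ^ 2)) / n)
          atTop (nhds (L ω))) ∧
      ∀ᵐ ω ∂P, (L ω < ⊤ ↔
        (∫⁻ ω', ENNReal.ofReal (Y 0 ω' ^ 2) ∂(condExpKernel P 𝓔 ω)) < ⊤) :=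
  stmt8_general 𝓔 h𝓔 P Y hYm hcondindep hcondid
end
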